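/- Let σ₁, σ₂ be objects of a triangulated category D such that Hom_D(σ₁, σ₁[k]) = 0 and Hom_D(σ₂, σ₂[k]) = 0 for all k > 0, and assume (A1) Hom_D(σ₁, σ₂[k]) = 0 for all k ≥ 0 and (A2) Hom_D(σ₂, σ₁[k]) = 0 for all k ≥ 2. Given a morphism α : σ₂ → σ₁[1], let σ̃ be defined by a triangle σ₁ → σ̃ → σ₂ --α--> σ₁[1]. Then: (1) Hom_D(σ̃ ⊕ σ₂, (σ̃ ⊕ σ₂)[k]) = 0 for all k > 0 if and only if α is left universal; (2) Hom_D(σ̃ ⊕ σ₁, (σ̃ ⊕ σ₁)[k]) = 0 for all k > 0 if and only if α is right universal. -/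

import Mathlib

open CategoryTheory Limits Pretriangulated

universe v u u₁ u₂ u₃

namespace Glue

variable {C : Type u} [Category.{v} C] [Preadditive C]

section Shift
variable [HasShift C ℤ]

/-- `Hom_C(X, Y⟦k⟧) = 0`. -/
def homShiftZero (X Y : C) (k : ℤ) : Prop := ∀ f : X ⟶ Y⟦k⟧, f = 0

/-- `Y ∈ X^{⊥>0}`. -/
def perpGT (X Y : C) : Prop := ∀ k : ℤ, 0 < k → homShiftZero X Y k

/-- `Y ∈ X^{⊥ℤ}`. -/
def perpZ (X Y : C) : Prop := ∀ k : ℤ, homShiftZero X Y k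

/-- `Y ∈ X^{⊥≥0}`. -/
def perpGE (X Y : C) : Prop := ∀ k : ℤ, 0 ≤ k → homShiftZero X Y k

/-- `Y ∈ X^{⊥≤0}`. -/
def perpLE (X Y : C) : Prop := ∀ k : ℤ, k ≤ 0 → homShiftZero X Y k

end Shift

/-- A class of objects is closed under (set-indexed) coproducts. -/
def ClosedUnderCoproducts (S : Set C) : Prop :=
  ∀ (J : Type v) (f : J → C) (c : Cofan f), IsColimit c → (∀ j, f j ∈ S) → c.pt ∈ S

section Coprod
variable [HasCoproducts.{v} C]

/-- An object is `κ`-small: any map to a coproduct factors through a subcoproduct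
with fewer than `κ` terms. -/
def IsKappaSmall (κ : Cardinal.{v}) (X : C) : Prop :=
  ∀ (J : Type v) (Y : J → C) (h : X ⟶ ∐ Y), ∃ Ω : Set J, Cardinal.mk Ω < κ ∧
    ∃ g : X ⟶ ∐ (fun ω : Ω => Y ω.1), h = g ≫ Sigma.desc (fun ω => Sigma.ι Y ω.1)

end Coprod

section WG
variable (C) [HasShift C ℤ] [HasCoproducts.{v} C]

/-- A triangulated category with coproducts is well generated if it admits a set of
`κ`-small weak generators satisfying the surjectivity condition of Krause. -/
def IsWellGenerated : Prop :=
  ∃ κ : Cardinal.{v}, κ.IsRegular ∧ ∃ S : Set C,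
    (∀ X ∈ S, IsKappaSmall κ X) ∧
    (∀ Y : C, (∀ X ∈ S, perpZ X Y) → IsZero Y) ∧
    (∀ (J : Type v) (A B : J → C) (g : ∀ j, A j ⟶ B j),
      (∀ X ∈ S, ∀ j, Function.Surjective (fun f : X ⟶ A j => f ≫ g j)) →
      ∀ X ∈ S, Function.Surjective (fun f : X ⟶ ∐ A => f ≫ Limits.Sigma.map g))

end WG

section Silting
variable [HasShift C ℤ]

/-- A partial silting object. -/
def IsPartialSilting (σ : C) : Prop :=
  perpGT σ σ ∧ ClosedUnderCoproducts {Y : C | perpGT σ Y}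

/-- A silting object. -/
def IsSilting (σ : C) : Prop :=
  IsPartialSilting σ ∧ ∀ Y : C, perpZ σ Y → IsZero Y

/-- A tilting object : silting and `σ^{(J)} ∈ σ^{⊥≠0}` for every set `J`. -/
def IsTilting [HasCoproducts.{v} C] (σ : C) : Prop :=
  IsSilting σ ∧ ∀ (J : Type v) (k : ℤ), k ≠ 0 → homShiftZero σ (∐ (fun _ : J => σ)) k

end Silting


section Loc
variable [HasZeroObject C] [HasShift C ℤ]
  [∀ n : ℤ, (shiftFunctor C n).Additive] [Pretriangulated C]

/-- A localizing subcategory: a triangulated subcategory closed under coproducts. -/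
def IsLocalizingSub (S : Set C) : Prop :=
  (∀ ⦃X Y : C⦄, (X ≅ Y) → X ∈ S → Y ∈ S) ∧
  (∃ Z : C, IsZero Z ∧ Z ∈ S) ∧
  (∀ X ∈ S, ∀ k : ℤ, (X⟦k⟧ : C) ∈ S) ∧
  (∀ T : Triangle C, T ∈ (distTriang C) → T.obj₁ ∈ S → T.obj₃ ∈ S → T.obj₂ ∈ S) ∧
  (∀ (J : Type v) (f : J → C) (c : Cofan f), IsColimit c → (∀ j, f j ∈ S) → c.pt ∈ S)

/-- `Loc ω` : the smallest localizing subcategory containing `ω`. -/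
def Loc (ω : C) : Set C :=
  {X : C | ∀ S : Set C, IsLocalizingSub S → ω ∈ S → X ∈ S}

end Loc

/-- A recollement of triangulated categories. -/
structure Recollement (Y : Type u₁) (D : Type u₂) (X : Type u₃)
    [Category.{v} Y] [Category.{v} D] [Category.{v} X]
    [HasZeroObject Y] [HasZeroObject D] [HasZeroObject X]
    [Preadditive Y] [Preadditive D] [Preadditive X]
    [HasShift Y ℤ] [HasShift D ℤ] [HasShift X ℤ]
    [∀ n : ℤ, (shiftFunctor Y n).Additive] [∀ n : ℤ, (shiftFunctor D n).Additive]
    [∀ n : ℤ, (shiftFunctor X n).Additive]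
    [Pretriangulated Y] [Pretriangulated D] [Pretriangulated X] where
  /-- `i^* : D ⥤ Y` -/
  iStar : D ⥤ Y
  /-- `i_* : Y ⥤ D` -/
  iLow : Y ⥤ D
  /-- `i^! : D ⥤ Y` -/
  iShriek : D ⥤ Y
  /-- `j_! : X ⥤ D` -/
  jShriek : X ⥤ D
  /-- `j^* : D ⥤ X` -/
  jStar : D ⥤ X
  /-- `j_* : X ⥤ D` -/
  jLow : X ⥤ D
  adj₁ : iStar ⊣ iLow
  adj₂ : iLow ⊣ iShriek
  adj₃ : jShriek ⊣ jStar
  adj₄ : jStar ⊣ jLow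
  iLow_full : iLow.Full
  iLow_faithful : iLow.Faithful
  jShriek_full : jShriek.Full
  jShriek_faithful : jShriek.Faithful
  jLow_full : jLow.Full
  jLow_faithful : jLow.Faithful
  jStar_iLow_zero : ∀ y : Y, IsZero (jStar.obj (iLow.obj y))
  iStar_commShift : iStar.CommShift ℤ
  iLow_commShift : iLow.CommShift ℤ
  iShriek_commShift : iShriek.CommShift ℤ
  jShriek_commShift : jShriek.CommShift ℤ
  jStar_commShift : jStar.CommShift ℤ
  jLow_commShift : jLow.CommShift ℤ
  iStar_triangulated : letI := iStar_commShift; iStar.IsTriangulated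
  iLow_triangulated : letI := iLow_commShift; iLow.IsTriangulated
  iShriek_triangulated : letI := iShriek_commShift; iShriek.IsTriangulated
  jShriek_triangulated : letI := jShriek_commShift; jShriek.IsTriangulated
  jStar_triangulated : letI := jStar_commShift; jStar.IsTriangulated
  jLow_triangulated : letI := jLow_commShift; jLow.IsTriangulated


/-!
The long exact Hom sequences of the triangle, together with the vanishing hypotheses and (A1),
kill every component of `Hom(σ̃ ⊕ σ₂, (σ̃ ⊕ σ₂)[k])`, `k > 0`, except `Hom(σ₂, σ̃[k])`, which is
the image of `a[k]_* : Hom(σ₂, σ₁[k]) → Hom(σ₂, σ̃[k])`. By (A2) this image vanishes for `k ≥ 2`,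
and for `k = 1` it vanishes iff every map `σ₂ → σ₁[1]` factors through `α`, by exactness at
`Hom(σ₂, σ₁[1])`. Dually, for `σ̃ ⊕ σ₁` the one remaining component is `Hom(σ̃, σ₁[k])`, the
image of `b^* : Hom(σ₂, σ₁[k]) → Hom(σ̃, σ₁[k])`.
-/

section Biprod

variable [HasShift C ℤ] [HasBinaryBiproducts C]

lemma homShiftZero_biprod_left_iff {A B Y : C} {k : ℤ} :
    homShiftZero (A ⊞ B) Y k ↔ homShiftZero A Y k ∧ homShiftZero B Y k := by
  refine ⟨fun h => ⟨fun f => ?_, fun f => ?_⟩, fun ⟨hA, hB⟩ f => biprod.hom_ext' _ _ ?_ ?_⟩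
  · simpa using congrArg (biprod.inl ≫ ·) (h (biprod.fst ≫ f))
  · simpa using congrArg (biprod.inr ≫ ·) (h (biprod.snd ≫ f))
  · rw [comp_zero]; exact hA _
  · rw [comp_zero]; exact hB _

lemma homShiftZero_biprod_right_iff [∀ n : ℤ, (shiftFunctor C n).Additive] {X A B : C} {k : ℤ} :
    homShiftZero X (A ⊞ B) k ↔ homShiftZero X A k ∧ homShiftZero X B k := by
  refine ⟨fun h => ⟨fun f => ?_, fun f => ?_⟩, fun ⟨hA, hB⟩ f => ?_⟩
  · simpa [← Functor.map_comp] using congrArg (· ≫ biprod.fst⟦k⟧') (h (f ≫ biprod.inl⟦k⟧'))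
  · simpa [← Functor.map_comp] using congrArg (· ≫ biprod.snd⟦k⟧') (h (f ≫ biprod.inr⟦k⟧'))
  · rw [← Category.comp_id f, ← (shiftFunctor C k).map_id, ← biprod.total]
    simp only [Functor.map_add, Functor.map_comp, Preadditive.comp_add, ← Category.assoc,
      hA (f ≫ biprod.fst⟦k⟧'), hB (f ≫ biprod.snd⟦k⟧'), zero_comp, add_zero]

lemma homShiftZero_biprod_self_iff [∀ n : ℤ, (shiftFunctor C n).Additive] {A B : C} {k : ℤ} :
    homShiftZero (A ⊞ B) (A ⊞ B) k ↔
      (homShiftZero A A k ∧ homShiftZero A B k) ∧ homShiftZero B A k ∧ homShiftZero B B k := by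
  rw [homShiftZero_biprod_left_iff, homShiftZero_biprod_right_iff, homShiftZero_biprod_right_iff]

end Biprod

section Triangle

variable [HasZeroObject C] [HasShift C ℤ] [∀ n : ℤ, (shiftFunctor C n).Additive]
  [Pretriangulated C] {T : Triangle C}

lemma homShiftZero_obj₂_left_of_mor₂_comp (hT : T ∈ distTriang C) {Y : C} {k : ℤ}
    (h₁ : homShiftZero T.obj₁ Y k) (h₃ : ∀ f : T.obj₃ ⟶ Y⟦k⟧, T.mor₂ ≫ f = 0) :
    homShiftZero T.obj₂ Y k := fun f => by
  obtain ⟨g, rfl⟩ := Triangle.yoneda_exact₂ T hT f (h₁ _)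
  exact h₃ g

lemma homShiftZero_obj₂_left (hT : T ∈ distTriang C) {Y : C} {k : ℤ}
    (h₁ : homShiftZero T.obj₁ Y k) (h₃ : homShiftZero T.obj₃ Y k) :
    homShiftZero T.obj₂ Y k :=
  homShiftZero_obj₂_left_of_mor₂_comp hT h₁ fun f => by rw [h₃ f, comp_zero]

lemma homShiftZero_obj₂_right_of_comp_mor₁ (hT : T ∈ distTriang C) {X : C} {k : ℤ}
    (h₃ : homShiftZero X T.obj₃ k) (h₁ : ∀ f : X ⟶ T.obj₁⟦k⟧, f ≫ T.mor₁⟦k⟧' = 0) :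
    homShiftZero X T.obj₂ k := fun f => by
  obtain ⟨g : X ⟶ T.obj₁⟦k⟧, hg⟩ :=
    Triangle.coyoneda_exact₂ _ (Triangle.shift_distinguished T hT k) f (h₃ _)
  change f = g ≫ (k.negOnePow • T.mor₁⟦k⟧') at hg
  rw [hg, Linear.comp_units_smul, h₁, smul_zero]

lemma homShiftZero_obj₂_right (hT : T ∈ distTriang C) {X : C} {k : ℤ}
    (h₁ : homShiftZero X T.obj₁ k) (h₃ : homShiftZero X T.obj₃ k) :
    homShiftZero X T.obj₂ k :=
  homShiftZero_obj₂_right_of_comp_mor₁ hT h₃ fun f => by rw [h₁ f, zero_comp]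

lemma surjective_comp_mor₃_iff (hT : T ∈ distTriang C) (X : C) :
    Function.Surjective (fun g : X ⟶ T.obj₃ => g ≫ T.mor₃) ↔
      ∀ f : X ⟶ T.obj₁⟦(1 : ℤ)⟧, f ≫ T.mor₁⟦(1 : ℤ)⟧' = 0 := by
  refine ⟨fun h f => ?_, fun h f => ?_⟩
  · obtain ⟨g, rfl⟩ := h f
    simp [comp_distTriang_mor_zero₃₁ _ hT]
  · obtain ⟨g, hg⟩ := Triangle.coyoneda_exact₁ T hT f (h f)
    exact ⟨g, hg.symm⟩

lemma surjective_mor₃_comp_iff (hT : T ∈ distTriang C) (Y : C) :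
    Function.Surjective (fun g : T.obj₁⟦(1 : ℤ)⟧ ⟶ Y => T.mor₃ ≫ g) ↔
      ∀ f : T.obj₃ ⟶ Y, T.mor₂ ≫ f = 0 := by
  refine ⟨fun h f => ?_, fun h f => ?_⟩
  · obtain ⟨g, rfl⟩ := h f
    simp [comp_distTriang_mor_zero₂₃_assoc _ hT]
  · obtain ⟨g, hg⟩ := Triangle.yoneda_exact₃ T hT f (h f)
    exact ⟨g, hg.symm⟩

end Triangle

/-- **Proposition 2.5**: `σ̃ ⊕ σ₂` (resp. `σ̃ ⊕ σ₁`) has no positive self-extensions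
if and only if `α` is left (resp. right) universal. -/
theorem cocone_biprod_self_orthogonal_iff_universal
    {D : Type u} [Category.{v} D] [Preadditive D] [HasZeroObject D] [HasShift D ℤ]
    [∀ n : ℤ, (shiftFunctor D n).Additive] [Pretriangulated D]
    [HasBinaryBiproducts D]
    (σ₁ σ₂ : D)
    (hσ₁ : ∀ k : ℤ, 0 < k → homShiftZero σ₁ σ₁ k)
    (hσ₂ : ∀ k : ℤ, 0 < k → homShiftZero σ₂ σ₂ k)
    (hA1 : ∀ k : ℤ, 0 ≤ k → homShiftZero σ₁ σ₂ k)
    (hA2 : ∀ k : ℤ, 2 ≤ k → homShiftZero σ₂ σ₁ k)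
    (α : σ₂ ⟶ σ₁⟦(1 : ℤ)⟧)
    (σt : D) (a : σ₁ ⟶ σt) (b : σt ⟶ σ₂)
    (hT : Triangle.mk a b α ∈ distTriang D) :
    ((∀ k : ℤ, 0 < k → homShiftZero (σt ⊞ σ₂) (σt ⊞ σ₂) k) ↔
      Function.Surjective (fun g : σ₂ ⟶ σ₂ => g ≫ α)) ∧
    ((∀ k : ℤ, 0 < k → homShiftZero (σt ⊞ σ₁) (σt ⊞ σ₁) k) ↔
      Function.Surjective (fun g : σ₁⟦(1 : ℤ)⟧ ⟶ σ₁⟦(1 : ℤ)⟧ => α ≫ g)) := by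
  have h₁t (k : ℤ) (hk : 0 < k) : homShiftZero σ₁ σt k :=
    homShiftZero_obj₂_right hT (hσ₁ k hk) (hA1 k hk.le)
  have ht₂ (k : ℤ) (hk : 0 < k) : homShiftZero σt σ₂ k :=
    homShiftZero_obj₂_left hT (hA1 k hk.le) (hσ₂ k hk)
  refine ⟨Iff.trans ?_ (surjective_comp_mor₃_iff hT σ₂).symm,
    Iff.trans ?_ (surjective_mor₃_comp_iff hT (σ₁⟦(1 : ℤ)⟧)).symm⟩
  · refine ⟨fun H f => (homShiftZero_biprod_self_iff.1 (H 1 one_pos)).2.1 (f ≫ a⟦(1 : ℤ)⟧'),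
      fun hα k hk => ?_⟩
    have h₂t : homShiftZero σ₂ σt k := by
      refine homShiftZero_obj₂_right_of_comp_mor₁ hT (hσ₂ k hk) ?_
      obtain rfl | hk₂ : k = 1 ∨ 2 ≤ k := by omega
      exacts [hα, fun f => (congrArg (· ≫ _) (hA2 k hk₂ f)).trans zero_comp]
    exact homShiftZero_biprod_self_iff.2
      ⟨⟨homShiftZero_obj₂_left hT (h₁t k hk) h₂t, ht₂ k hk⟩, h₂t, hσ₂ k hk⟩
  · refine ⟨fun H f => (homShiftZero_biprod_self_iff.1 (H 1 one_pos)).1.2 (b ≫ f),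
      fun hα k hk => ?_⟩
    have ht₁ : homShiftZero σt σ₁ k := by
      refine homShiftZero_obj₂_left_of_mor₂_comp hT (hσ₁ k hk) ?_
      obtain rfl | hk₂ : k = 1 ∨ 2 ≤ k := by omega
      exacts [hα, fun f => (congrArg (_ ≫ ·) (hA2 k hk₂ f)).trans comp_zero]
    exact homShiftZero_biprod_self_iff.2
      ⟨⟨homShiftZero_obj₂_right hT ht₁ (ht₂ k hk), ht₁⟩, h₁t k hk, hσ₁ k hk⟩

end Glue
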